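/- arXiv:2604.11505 — 3 statements merged into one kernel-verified Lean document; each statement's English description precedes it below -/
import Mathlib

section
/- Let n, s ≥ 1 and t be integers with 0 ≤ t ≤ s + 1, and let Q = K_t ∨ (K_{2k_1+1} ∪ ... ∪ K_{2k_q+1}) be the join of a clique of size t with a disjoint union of odd cliques, where k_1 ≥ k_2 ≥ ... ≥ k_q ≥ 0 and t + k_1 + ... + k_q = s + 1 and |V(Q)| = n. Then e(Q) ≤ e(K_t ∨ (K_{2s+3−2t} ∪ complement(K_{n−2s−3+t}))) = C(n,2) − C(n−t,2) + C(2s+3−2t,2). -/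
open SimpleGraph

/-- `M` is a matching in `G`: a set of edges of `G`, pairwise vertex-disjoint. -/
def IsMatchingOn {V : Type*} (G : SimpleGraph V) (M : Set (Sym2 V)) : Prop :=
  M ⊆ G.edgeSet ∧ M.Pairwise fun e f => ∀ v, v ∈ e → v ∉ f

/-- The matching number of `G`. -/
noncomputable def matchNum {V : Type*} (G : SimpleGraph V) : ℕ :=
  sSup {k | ∃ M : Finset (Sym2 V), IsMatchingOn G ↑M ∧ M.card = k}

/-- The graph `K_t ∨ (K_a ∪ complement (K_(n-t-a)))` on vertex set `Fin n`. -/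
def joinGraph (t a n : ℕ) : SimpleGraph (Fin n) where
  Adj i j := i ≠ j ∧ ((i : ℕ) < t ∨ (j : ℕ) < t ∨ ((i : ℕ) < t + a ∧ (j : ℕ) < t + a))
  symm := ⟨fun i j h => ⟨h.1.symm, by tauto⟩⟩
  loopless := ⟨fun i h => h.1 rfl⟩

/-- The graph `K_t ∨ (K_(2k₁+1) ∪ ⋯ ∪ K_(2k_q+1))`. -/
def Qgraph (t q : ℕ) (k : Fin q → ℕ) :
    SimpleGraph (Fin t ⊕ Σ i : Fin q, Fin (2 * k i + 1)) where
  Adj u v := u ≠ v ∧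
    (Sum.elim (fun _ => (none : Option (Fin q))) (fun p => some p.1) u = none ∨
     Sum.elim (fun _ => (none : Option (Fin q))) (fun p => some p.1) v = none ∨
     Sum.elim (fun _ => (none : Option (Fin q))) (fun p => some p.1) u =
       Sum.elim (fun _ => (none : Option (Fin q))) (fun p => some p.1) v)
  symm := ⟨fun u v h => ⟨h.1.symm, by tauto⟩⟩
  loopless := ⟨fun u h => h.1 rfl⟩

/-!
Both graphs are joins of a clique on `T` vertices with a disjoint union of cliques of sizes
`mᵢ`, and the handshake lemma gives `e = C(n,2) - C(n-T,2) + ∑ C(mᵢ,2)` for every such graph.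
For `Q` the cliques have sizes `2kᵢ+1`, and
`∑ C(2kᵢ+1,2) = ∑ kᵢ(2kᵢ+1) ≤ (∑ kᵢ)(2∑ kᵢ+1) = C(2s+3-2t,2)`,
which is the contribution of the single clique `K_(2s+3-2t)` of the extremal graph.
-/

open Finset

theorem Nat.two_mul_choose_two_add_self (x : ℕ) : 2 * x.choose 2 + x = x * x := by
  induction x with
  | zero => rfl
  | succ x ih => rw [Nat.choose_succ_succ', Nat.choose_one_right]; nlinarith

theorem Nat.two_mul_add_one_choose_two (m : ℕ) : (2 * m + 1).choose 2 = m * (2 * m + 1) := by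
  have := Nat.two_mul_choose_two_add_self (2 * m + 1)
  nlinarith

theorem Finset.sum_two_mul_add_one_choose_two_le {α : Type*} (s : Finset α) (k : α → ℕ) :
    ∑ i ∈ s, (2 * k i + 1).choose 2 ≤ (2 * ∑ i ∈ s, k i + 1).choose 2 := by
  simp only [Nat.two_mul_add_one_choose_two, sum_mul]
  gcongr with i hi
  exact single_le_sum (fun j _ => Nat.zero_le (k j)) hi

theorem Fintype.card_eq_card_filter_none_add_sum {V ι : Type*} [Fintype V] [Fintype ι]
    [DecidableEq ι] (c : V → Option ι) :
    Fintype.card V = #{v | c v = none} + ∑ i, #{v | c v = some i} := by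
  rw [← card_univ, card_eq_sum_card_fiberwise (fun v _ => mem_univ (c v)), Fintype.sum_option]

namespace SimpleGraph

variable {V ι : Type*}

/-- The join of the clique on `c⁻¹(none)` with the disjoint union of the cliques on the
fibres `c⁻¹(some i)`. -/
def cliqueJoin (c : V → Option ι) : SimpleGraph V where
  Adj u v := u ≠ v ∧ (c u = none ∨ c v = none ∨ c u = c v)
  symm := ⟨fun _ _ h => ⟨h.1.symm, by tauto⟩⟩
  loopless := ⟨fun _ h => h.1 rfl⟩

theorem degree_add_one_eq_card_filter [Fintype V] [DecidableEq V] (G : SimpleGraph V)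
    [DecidableRel G.Adj] (v : V) : G.degree v + 1 = #{u | u = v ∨ G.Adj v u} := by
  rw [filter_or, card_union_of_disjoint, filter_eq', if_pos (mem_univ v), card_singleton,
    add_comm, degree, neighborFinset_eq_filter]
  exact disjoint_filter.mpr fun u _ h => h ▸ G.irrefl

theorem cliqueJoin_degree_add_one [Fintype V] [DecidableEq V] [DecidableEq ι] (c : V → Option ι)
    [DecidableRel (cliqueJoin c).Adj] (v : V) :
    (cliqueJoin c).degree v + 1 = #{u | c v = none ∨ c u = none ∨ c u = c v} := by
  rw [degree_add_one_eq_card_filter]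
  congr 1
  refine filter_congr fun u _ => ?_
  by_cases h : u = v
  · subst h; simp
  · simp [cliqueJoin, h, Ne.symm h, eq_comm]

theorem sum_degree_add_one_cliqueJoin [Fintype V] [DecidableEq V] [Fintype ι] [DecidableEq ι]
    (c : V → Option ι) [DecidableRel (cliqueJoin c).Adj] :
    ∑ v, ((cliqueJoin c).degree v + 1) = #{v | c v = none} * Fintype.card V +
      ∑ i, #{v | c v = some i} * (#{v | c v = none} + #{v | c v = some i}) := by
  simp_rw [cliqueJoin_degree_add_one]
  rw [← sum_fiberwise' univ c (fun j => #{u | j = none ∨ c u = none ∨ c u = j}),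
    Fintype.sum_option]
  simp only [sum_const, smul_eq_mul, true_or, filter_true, card_univ, reduceCtorEq, false_or]
  congr 1
  refine sum_congr rfl fun i _ => ?_
  rw [filter_or, card_union_of_disjoint (disjoint_filter.mpr fun v _ h => by simp [h])]

theorem ncard_edgeSet_cliqueJoin [Fintype V] [Fintype ι] [DecidableEq ι] (c : V → Option ι) :
    (cliqueJoin c).edgeSet.ncard + (Fintype.card V - #{v | c v = none}).choose 2 =
      (Fintype.card V).choose 2 + ∑ i, (#{v | c v = some i}).choose 2 := by
  classical
  set T := #{v | c v = none}
  set m := fun i => #{v | c v = some i}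
  have hV : Fintype.card V = T + ∑ i, m i := Fintype.card_eq_card_filter_none_add_sum c
  have hdeg := sum_degree_add_one_cliqueJoin c
  rw [sum_add_distrib, sum_degrees_eq_twice_card_edges, sum_const, card_univ, smul_eq_mul,
    mul_one] at hdeg
  have hm : ∑ i, m i * (T + m i) = T * ∑ i, m i + ∑ i, m i * m i := by
    rw [mul_sum, ← sum_add_distrib]
    exact sum_congr rfl fun i _ => by ring
  have hchoose : 2 * ∑ i, (m i).choose 2 + ∑ i, m i = ∑ i, m i * m i := by
    rw [mul_sum, ← sum_add_distrib]
    exact sum_congr rfl fun i _ => Nat.two_mul_choose_two_add_self (m i)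
  rw [← coe_edgeFinset, Set.ncard_coe_finset, hV, Nat.add_sub_cancel_left]
  rw [hm, hV] at hdeg
  have := Nat.two_mul_choose_two_add_self (T + ∑ i, m i)
  have := Nat.two_mul_choose_two_add_self (∑ i, m i)
  nlinarith

end SimpleGraph

theorem Qgraph_eq_cliqueJoin (t q : ℕ) (k : Fin q → ℕ) :
    Qgraph t q k = SimpleGraph.cliqueJoin (Sum.elim (fun _ => none) fun p => some p.1) :=
  rfl

theorem ncard_edgeSet_Qgraph (t q : ℕ) (k : Fin q → ℕ) :
    (Qgraph t q k).edgeSet.ncard + (∑ i, (2 * k i + 1)).choose 2 =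
      (t + ∑ i, (2 * k i + 1)).choose 2 + ∑ i, (2 * k i + 1).choose 2 := by
  rw [Qgraph_eq_cliqueJoin]
  set c : Fin t ⊕ (Σ i, Fin (2 * k i + 1)) → Option (Fin q) :=
    Sum.elim (fun _ => none) fun p => some p.1
  have hnone : #{v | c v = none} = t := by
    rw [card_filter, Fintype.sum_sum_type]
    simp [c]
  have hsome (i : Fin q) : #{v | c v = some i} = 2 * k i + 1 := by
    rw [card_filter, Fintype.sum_sum_type, Fintype.sum_sigma]
    simp [c]
  simpa [hnone, hsome, Fintype.card_sigma] using
    SimpleGraph.ncard_edgeSet_cliqueJoin c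

theorem joinGraph_eq_cliqueJoin (t a n : ℕ) :
    joinGraph t a n = SimpleGraph.cliqueJoin fun i : Fin n =>
      if (i : ℕ) < t then none else if (i : ℕ) < t + a then some none else some (some i) := by
  ext i j
  simp only [joinGraph, SimpleGraph.cliqueJoin, and_congr_right_iff]
  intro hij
  have hij' : (i : ℕ) ≠ j := Fin.val_ne_of_ne hij
  split_ifs <;> simp_all

theorem ncard_edgeSet_joinGraph (t a n : ℕ) :
    (joinGraph t a n).edgeSet.ncard + (n - t).choose 2 =
      n.choose 2 + (min n (t + a) - t).choose 2 := by
  set c := fun i : Fin n =>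
    if (i : ℕ) < t then none else if (i : ℕ) < t + a then some none else some (some i)
  have hnone : #{i | c i = none} = min n t := by
    rw [← Fin.card_filter_val_lt]
    congr 1
    exact filter_congr fun i _ => by simp only [c]; split_ifs <;> simp_all
  have hblock : #{i | c i = some none} = min n (t + a) - min n t := by
    have hsub : ({i | (i : ℕ) < t} : Finset (Fin n)) ⊆
        ({i | (i : ℕ) < t + a} : Finset (Fin n)) :=
      monotone_filter_right _ fun _ _ _ => by omega
    rw [← Fin.card_filter_val_lt, ← Fin.card_filter_val_lt, ← card_sdiff_of_subset hsub]
    congr 1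
    ext i
    simp only [c, mem_filter, mem_sdiff, mem_univ, true_and]
    split_ifs <;> simp_all
  have hsingle (j : Fin n) : (#{i | c i = some (some j)}).choose 2 = 0 := by
    refine Nat.choose_eq_zero_of_lt (Nat.lt_succ_of_le (card_le_one.mpr fun i hi i' hi' => ?_))
    simp only [c, mem_filter, mem_univ, true_and] at hi hi'
    split_ifs at hi hi' <;> simp_all
  have := SimpleGraph.ncard_edgeSet_cliqueJoin c
  rw [Fintype.sum_option, hnone, hblock, sum_eq_zero fun j _ => hsingle j, Fintype.card_fin,
    ← joinGraph_eq_cliqueJoin] at this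
  rw [show n - t = n - min n t by omega, show min n (t + a) - t = min n (t + a) - min n t by omega]
  simpa using this

theorem stmt_3_general (n s t q : ℕ) (k : Fin q → ℕ) (hsum : t + ∑ i, k i = s + 1)
    (hn : n = t + ∑ i, (2 * k i + 1)) :
    (Qgraph t q k).edgeSet.ncard ≤
      Nat.choose n 2 - Nat.choose (n - t) 2 + Nat.choose (2 * s + 3 - 2 * t) 2 ∧
    (joinGraph t (2 * s + 3 - 2 * t) n).edgeSet.ncard =
      Nat.choose n 2 - Nat.choose (n - t) 2 + Nat.choose (2 * s + 3 - 2 * t) 2 := by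
  have hodd : ∑ i, (2 * k i + 1) = 2 * ∑ i, k i + q := by simp [sum_add_distrib, mul_sum]
  have ha : 2 * s + 3 - 2 * t = 2 * ∑ i, k i + 1 := by omega
  have hle : (n - t).choose 2 ≤ n.choose 2 := Nat.choose_le_choose 2 (Nat.sub_le n t)
  have hQ := ncard_edgeSet_Qgraph t q k
  rw [← hn, show ∑ i, (2 * k i + 1) = n - t by omega] at hQ
  have hcliques := sum_two_mul_add_one_choose_two_le univ k
  rw [← ha] at hcliques
  have hJ := ncard_edgeSet_joinGraph t (2 * s + 3 - 2 * t) n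
  -- if `q = 0` then `n = t` and the block `K_(2s+3-2t) = K_1` does not fit, but has no edges
  have hblock : (min n (t + (2 * s + 3 - 2 * t)) - t).choose 2 = (2 * s + 3 - 2 * t).choose 2 := by
    rcases q.eq_zero_or_pos with rfl | hq
    · rw [show min n (t + (2 * s + 3 - 2 * t)) - t = 0 by simp at hn; omega, ha]
      simp
    · congr 1
      omega
  omega

/-- Among joins of a `t`-clique with odd cliques `K_(2kᵢ+1)` with `t + Σkᵢ = s+1` on `n`
vertices, the number of edges is at most that of
`K_t ∨ (K_(2s+3-2t) ∪ complement K_(n-2s-3+t))`, which is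
`C(n,2) − C(n−t,2) + C(2s+3−2t,2)`. -/
theorem stmt_3 (n s t q : ℕ) (hs : 1 ≤ s) (ht : t ≤ s + 1) (k : Fin q → ℕ)
    (hmono : Antitone k) (hsum : t + ∑ i, k i = s + 1)
    (hn : n = t + ∑ i, (2 * k i + 1)) :
    (Qgraph t q k).edgeSet.ncard ≤
      Nat.choose n 2 - Nat.choose (n - t) 2 + Nat.choose (2 * s + 3 - 2 * t) 2 ∧
    (joinGraph t (2 * s + 3 - 2 * t) n).edgeSet.ncard =
      Nat.choose n 2 - Nat.choose (n - t) 2 + Nat.choose (2 * s + 3 - 2 * t) 2 :=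
  stmt_3_general n s t q k hsum hn
end

section
/- Let s ≥ 2 and n ≥ 2s + 5 be integers, and let h₁(n,s,j) = C(s−1,2) + (s−1−j)(n−s+1) + j(j+6) + 10 for j ∈ [1, s−1]. Then h₁(n,s,j) ≤ max{h₁(n,s,1), h₁(n,s,s−1)}, and if additionally n ≥ 40 then max{h₁(n,s,1), h₁(n,s,s−1)} < max{ C(n,2) − C(n−s+1,2) + 5, C(2s−1,2) + n + 1 }. -/
lemma ch2 (k : ℕ) : 2 * Nat.choose (k + 1) 2 = (k + 1) * k := by
  induction k with
  | zero => rfl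
  | succ k ih =>
    rw [show k + 1 + 1 = (k + 1) + 1 from rfl, Nat.choose_succ_succ,
      Nat.choose_one_right, Nat.mul_add, ih]
    ring

/-- For `h₁(n,s,j) = C(s−1,2) + (s−1−j)(n−s+1) + j(j+6) + 10` with `1 ≤ j ≤ s−1`,
`h₁(n,s,j) ≤ max{h₁(n,s,1), h₁(n,s,s−1)}`, and if moreover `n ≥ 40` then this maximum is
less than `max{C(n,2) − C(n−s+1,2) + 5, C(2s−1,2) + n + 1}`. -/
theorem stmt_10 (n s : ℕ) (hs : 2 ≤ s) (hn : 2 * s + 5 ≤ n)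
    (h₁ : ℕ → ℕ)
    (hdef : ∀ j, h₁ j = Nat.choose (s - 1) 2 + (s - 1 - j) * (n - s + 1) + j * (j + 6) + 10) :
    (∀ j, 1 ≤ j → j ≤ s - 1 → h₁ j ≤ max (h₁ 1) (h₁ (s - 1))) ∧
    (40 ≤ n → max (h₁ 1) (h₁ (s - 1)) <
      max (Nat.choose n 2 - Nat.choose (n - s + 1) 2 + 5)
        (Nat.choose (2 * s - 1) 2 + n + 1)) := by
  obtain ⟨m, rfl⟩ : ∃ m, s = m + 2 := ⟨s - 2, by omega⟩
  obtain ⟨A, rfl⟩ : ∃ A, n = A + m + 1 := ⟨n - m - 1, by omega⟩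
  have hA : m + 8 ≤ A := by omega
  have e1 : m + 2 - 1 = m + 1 := by omega
  have e2 : A + m + 1 - (m + 2) + 1 = A := by omega
  simp only [e1, e2] at hdef ⊢
  constructor
  · intro j hj1 hj2
    rcases le_or_gt A (j + 6) with hc | hc
    · refine le_trans ?_ (le_max_right _ _)
      rw [hdef, hdef]
      obtain ⟨k, hk⟩ : ∃ k, m + 1 = j + k := ⟨m + 1 - j, by omega⟩
      have h3 : m + 1 - j = k := by omega
      have h4 : m + 1 - (m + 1) = 0 := by omega
      rw [h3, h4, hk]
      nlinarith
    · refine le_trans ?_ (le_max_left _ _)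
      rw [hdef, hdef]
      obtain ⟨i, rfl⟩ : ∃ i, j = i + 1 := ⟨j - 1, by omega⟩
      obtain ⟨k, hk⟩ : ∃ k, m = i + k := ⟨m - i, by omega⟩
      have h3 : m + 1 - (i + 1) = k := by omega
      have h4 : m + 1 - 1 = m := by omega
      rw [h3, h4, hk]
      nlinarith
  · intro h40
    obtain ⟨B, rfl⟩ : ∃ B, A = B + m + 8 := ⟨A - m - 8, by omega⟩
    apply max_lt_max
    · -- h₁ 1 < C(n,2) - C(A,2) + 5
      rw [hdef]
      have hle : Nat.choose (B + m + 8) 2 ≤ Nat.choose (B + m + 8 + m + 1) 2 :=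
        Nat.choose_le_choose 2 (by omega)
      have c1 := ch2 (B + m + 8 + m)
      have c2 := ch2 (B + m + 7)
      have c3 := ch2 m
      have h3 : m + 1 - 1 = m := by omega
      have h4 : B + m + 8 + m + 1 = (B + m + 8 + m) + 1 := by omega
      have h5 : B + m + 8 = (B + m + 7) + 1 := by omega
      rw [h3, h4, h5] at *
      zify [hle] at c1 c2 c3 ⊢
      nlinarith
    · -- h₁ (m+1) < C(2s-1,2) + n + 1
      rw [hdef]
      have h4 : m + 1 - (m + 1) = 0 := by omega
      have h5 : 2 * (m + 2) - 1 = (2 * m + 2) + 1 := by omega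
      rw [h4, h5]
      have c1 := ch2 (2 * m + 2)
      have c3 := ch2 m
      nlinarith
end

section
/- Let s ≥ 2 and n ≥ max{2s+5, 40} be integers, and let h₃(n,s,j) = C(s,2) + (s−j)(n−s) + j(j+4) + 3 for integer j ∈ [2, s]. Then h₃(n,s,j) ≤ max{h₃(n,s,2), h₃(n,s,s)} < max{ C(n,2) − C(n−s+1,2) + 5, C(2s−1,2) + n + 1 }. -/
lemma two_choose_two (m : ℕ) : 2 * Nat.choose m 2 = m * (m - 1) := by
  cases m with
  | zero => simp
  | succ k =>
    rw [Nat.choose_two_right, Nat.succ_sub_one, Nat.mul_div_cancel']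
    rcases Nat.even_mul_succ_self k with ⟨r, hr⟩
    rw [mul_comm]
    omega

/-- For `h₃(n,s,j) = C(s,2) + (s−j)(n−s) + j(j+4) + 3` with integer `2 ≤ j ≤ s`,
`h₃(n,s,j) ≤ max{h₃(n,s,2), h₃(n,s,s)} < max{C(n,2) − C(n−s+1,2) + 5, C(2s−1,2) + n + 1}`
when `s ≥ 2` and `n ≥ max{2s+5, 40}`. -/
theorem stmt_12 (n s : ℕ) (hs : 2 ≤ s) (hn1 : 2 * s + 5 ≤ n) (hn2 : 40 ≤ n)
    (h₃ : ℕ → ℕ)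
    (hdef : ∀ j, h₃ j = Nat.choose s 2 + (s - j) * (n - s) + j * (j + 4) + 3) :
    (∀ j, 2 ≤ j → j ≤ s → h₃ j ≤ max (h₃ 2) (h₃ s)) ∧
    max (h₃ 2) (h₃ s) <
      max (Nat.choose n 2 - Nat.choose (n - s + 1) 2 + 5)
        (Nat.choose (2 * s - 1) 2 + n + 1) := by
  obtain ⟨u, hu⟩ : ∃ u, s = u + 2 := ⟨s - 2, by omega⟩
  subst hu
  obtain ⟨t, hts⟩ : ∃ t, n = u + 2 + t := ⟨n - (u + 2), by omega⟩
  subst hts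
  have ht : 11 ≤ t := by omega
  have hst : u + 7 ≤ t := by omega
  constructor
  · intro j hj2 hjs
    rcases eq_or_lt_of_le hjs with rfl | hlt
    · exact le_max_right _ _
    · refine le_trans ?_ (le_max_left _ _)
      rw [hdef, hdef]
      obtain ⟨k, hk⟩ : ∃ k, j = k + 2 := ⟨j - 2, by omega⟩
      subst hk
      have h2 : u + 2 + t - (u + 2) = t := by omega
      have h3 : u + 2 - 2 = u := by omega
      rw [h2, h3]
      have e1 : u * t = (u + 2 - (k + 2)) * t + k * t := by
        rw [← add_mul]; congr 1; omega
      have e2 : (k + 2) * (k + 2 + 4) ≤ k * t + 2 * (2 + 4) := by nlinarith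
      omega
  · have hc1 : 2 * Nat.choose (u + 2 + t) 2 = (u + 2 + t) * (u + 1 + t) := by
      rw [two_choose_two]; congr 1; omega
    have hc2 : 2 * Nat.choose (t + 1) 2 = (t + 1) * t := by
      rw [two_choose_two, Nat.add_sub_cancel]
    have hc3 : 2 * Nat.choose (2 * (u + 2) - 1) 2 = (2 * u + 3) * (2 * u + 2) := by
      rw [show 2 * (u + 2) - 1 = 2 * u + 3 from by omega, two_choose_two]; rfl
    have hcs : 2 * Nat.choose (u + 2) 2 = (u + 2) * (u + 1) := by
      rw [two_choose_two]; rfl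
    have hA : h₃ 2 < Nat.choose (u + 2 + t) 2 - Nat.choose (u + 2 + t - (u + 2) + 1) 2 + 5 := by
      rw [show u + 2 + t - (u + 2) + 1 = t + 1 from by omega]
      rw [hdef]
      have h2 : u + 2 + t - (u + 2) = t := by omega
      have h3 : u + 2 - 2 = u := by omega
      rw [h2, h3]
      have key : 2 * Nat.choose (t + 1) 2
            + 2 * (Nat.choose (u + 2) 2 + u * t + 2 * (2 + 4) + 3)
          < 2 * Nat.choose (u + 2 + t) 2 + 10 := by
        nlinarith [hc1, hc2, hcs, ht]
      omega
    have hB : h₃ (u + 2) < Nat.choose (2 * (u + 2) - 1) 2 + (u + 2 + t) + 1 := by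
      rw [hdef]
      have h4 : u + 2 - (u + 2) = 0 := by omega
      rw [h4]
      have h9 : 9 * u ≤ u * u + 56 := by
        rcases le_or_gt u 9 with h | h
        · interval_cases u <;> omega
        · nlinarith
      have key : 2 * (Nat.choose (u + 2) 2 + 0 * (u + 2 + t - (u + 2)) + (u + 2) * (u + 2 + 4) + 3)
          < 2 * Nat.choose (2 * (u + 2) - 1) 2 + 2 * (u + 2 + t) + 2 := by
        nlinarith [hc3, hcs, h9, hn2]
      omega
    exact max_lt (lt_of_lt_of_le hA (le_max_left _ _))
      (lt_of_lt_of_le hB (le_max_right _ _))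
end
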